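/- arXiv:1812.06828 — 8 statements merged into one kernel-verified Lean document; each statement's English description precedes it below -/
import Mathlib

section
/- Let k be a field of characteristic zero and let g, h ∈ k[X₁,…,Xₙ] be coprime polynomials with g irreducible of degree d ≥ 1. Then there exists a field extension k₁ of k of degree at most d and a point p ∈ k₁ⁿ such that g(p) = 0, h(p) ≠ 0, and the gradient of g at p is nonzero. -/
/-!
Choose a variable `Xᵢ` in which `g` has positive degree and view `g` and `h` as polynomials in `Xᵢ`
over `R = k[Xⱼ : j ≠ i]`. In characteristic zero `∂g/∂Xᵢ` is nonzero and of smaller degree in `Xᵢ`,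
so the prime `g` divides neither it nor `h`, hence not `F = h · ∂g/∂Xᵢ`. By Gauss's lemma `g` and `F`
are coprime over `Frac R`, and the resultant gives `a g + b F = c` with `0 ≠ c ∈ R`. Specialise the
other variables at a point of `kⁿ⁻¹` where neither `c` nor the leading coefficient of `g` vanishes
(`k` is infinite), and adjoin a root of an irreducible factor of the specialised `g`, whose degree is
`deg_{Xᵢ} g ≤ d`. At that root `g` vanishes, while `c ≠ 0` forces `F ≠ 0`.
-/

universe u

open scoped Polynomial

namespace Polynomial

theorem not_dvd_derivative {R : Type*} [CommSemiring R] [NoZeroDivisors R] [IsAddTorsionFree R]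
    {p : R[X]} (hp : p.natDegree ≠ 0) : ¬ p ∣ derivative p := fun hdvd =>
  (natDegree_derivative_lt hp).not_ge
    (natDegree_le_of_dvd hdvd (mt derivative_eq_zero.mp hp))

theorem exists_mul_add_mul_eq_C_of_not_dvd {R : Type*} [CommRing R] [IsDomain R] [IsGCDMonoid R]
    {p q : R[X]} (hp : Irreducible p) (hdeg : p.natDegree ≠ 0) (hpq : ¬ p ∣ q) :
    ∃ c ≠ 0, ∃ a b : R[X], p * a + q * b = C c := by
  let K := FractionRing R
  have hinj : Function.Injective (algebraMap R K) := IsFractionRing.injective R K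
  have hprim := hp.isPrimitive hdeg
  have hcop : IsCoprime (p.map (algebraMap R K)) (q.map (algebraMap R K)) :=
    (hprim.irreducible_iff_irreducible_map_fraction_map.mp hp).coprime_iff_not_dvd.mpr
      (mt hprim.dvd_of_fraction_map_dvd_fraction_map hpq)
  have hres : (p.map (algebraMap R K)).resultant (q.map (algebraMap R K)) ≠ 0 :=
    fun h0 => (resultant_eq_zero_iff.mp h0).2 hcop
  rw [natDegree_map_eq_of_injective hinj, natDegree_map_eq_of_injective hinj,
    resultant_map_map] at hres
  obtain ⟨a, b, -, -, hab⟩ := exists_mul_add_mul_eq_C_resultant p q le_rfl le_rfl (Or.inl hdeg)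
  exact ⟨_, fun h0 => hres (by rw [h0, map_zero]), a, b, hab⟩

theorem aeval_map_ne_zero_of_mul_add_mul_eq_C {R k A : Type*} [CommRing R] [Field k] [CommRing A]
    [Nontrivial A] [Algebra k A] (e : R →+* k) {p q a b : R[X]} {c : R}
    (hab : p * a + q * b = C c) (hc : e c ≠ 0) {α : A} (hα : aeval α (p.map e) = 0) :
    aeval α (q.map e) ≠ 0 := by
  intro hq
  have := congrArg (fun f => aeval α (f.map e)) hab
  simp only [Polynomial.map_add, Polynomial.map_mul, map_add, map_mul, hα, hq, zero_mul,
    add_zero, Polynomial.map_C, aeval_C] at this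
  exact hc ((algebraMap k A).injective (by rw [← this, map_zero]))

theorem exists_aeval_eq_zero_finrank_le {k : Type u} [Field k] {p : k[X]} (hp : p.natDegree ≠ 0) :
    ∃ (K : Type u) (_ : Field K) (_ : Algebra k K),
      FiniteDimensional k K ∧ Module.finrank k K ≤ p.natDegree ∧ ∃ α : K, aeval α p = 0 := by
  obtain ⟨f, hf, hfp⟩ := exists_irreducible_of_natDegree_pos (Nat.pos_of_ne_zero hp)
  have := Fact.mk hf
  let pb := AdjoinRoot.powerBasis hf.ne_zero
  refine ⟨AdjoinRoot f, inferInstance, inferInstance, pb.finite, ?_, AdjoinRoot.root f, ?_⟩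
  · rw [pb.finrank]
    exact natDegree_le_of_dvd hfp (by rintro rfl; simp at hp)
  · obtain ⟨r, rfl⟩ := hfp
    rw [map_mul, AdjoinRoot.aeval_eq, AdjoinRoot.mk_self, zero_mul]

end Polynomial

namespace MvPolynomial

variable {R σ : Type*}

theorem exists_degreeOf_pos [CommSemiring R] {p : MvPolynomial σ R} (hp : p.totalDegree ≠ 0) :
    ∃ i, 0 < p.degreeOf i := by
  obtain ⟨m, hm, i, hi⟩ : ∃ m ∈ p.support, ∃ i, m i ≠ 0 := by
    simpa [totalDegree_eq_zero_iff] using hp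
  exact ⟨i, (Nat.pos_of_ne_zero hi).trans_le (monomial_le_degreeOf i hm)⟩

theorem exists_eval_ne_zero [CommRing R] [IsDomain R] [Infinite R] {p : MvPolynomial σ R}
    (hp : p ≠ 0) : ∃ x, eval x p ≠ 0 := by
  by_contra! h
  exact hp (funext (by simpa using h))

theorem optionEquivLeft_pderiv_none [CommSemiring R] (p : MvPolynomial (Option σ) R) :
    optionEquivLeft R σ (pderiv none p) = Polynomial.derivative (optionEquivLeft R σ p) := by
  classical
  induction p using MvPolynomial.induction_on with
  | C a => simp [optionEquivLeft_C]
  | add p q hp hq => simp [hp, hq]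
  | mul_X p j hp =>
    cases j <;> simp [hp, Derivation.leibniz, optionEquivLeft_X_none, optionEquivLeft_X_some,
      Polynomial.derivative_mul, mul_comm]

section isolateVar

variable (R) [CommSemiring R] [DecidableEq σ]

noncomputable def isolateVarEquiv (i : σ) :
    MvPolynomial σ R ≃ₐ[R] (MvPolynomial {j // j ≠ i} R)[X] :=
  (renameEquiv R (Equiv.optionSubtypeNe i).symm).trans (optionEquivLeft R {j // j ≠ i})

variable {R}

theorem isolateVarEquiv_apply (i : σ) (p : MvPolynomial σ R) :
    isolateVarEquiv R i p =
      optionEquivLeft R {j // j ≠ i} (rename (Equiv.optionSubtypeNe i).symm p) := rfl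

theorem natDegree_isolateVarEquiv (i : σ) (p : MvPolynomial σ R) :
    (isolateVarEquiv R i p).natDegree = p.degreeOf i := by
  rw [isolateVarEquiv_apply, natDegree_optionEquivLeft, ← Equiv.optionSubtypeNe_symm_self i,
    degreeOf_rename_of_injective (Equiv.injective _)]

theorem isolateVarEquiv_pderiv (i : σ) (p : MvPolynomial σ R) :
    isolateVarEquiv R i (pderiv i p) = Polynomial.derivative (isolateVarEquiv R i p) := by
  rw [isolateVarEquiv_apply, isolateVarEquiv_apply, ← optionEquivLeft_pderiv_none,
    ← Equiv.optionSubtypeNe_symm_self i, pderiv_rename (Equiv.injective _)]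

theorem aeval_eq_aeval_map_isolateVarEquiv {k A : Type*} [CommSemiring k] [CommSemiring A]
    [Algebra k A] (i : σ) {x : σ → A} (q : {j // j ≠ i} → k)
    (hx : ∀ j : {j // j ≠ i}, x j = algebraMap k A (q j)) (p : MvPolynomial σ k) :
    aeval x p = Polynomial.aeval (x i) ((isolateVarEquiv k i p).map (eval q)) := by
  induction p using MvPolynomial.induction_on with
  | C a => simp [isolateVarEquiv_apply, optionEquivLeft_C]
  | add p q hp hq => simp [hp, hq]
  | mul_X p j hp =>
    rw [map_mul, map_mul, Polynomial.map_mul, map_mul, hp]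
    congr 1
    by_cases hj : j = i
    · subst hj
      simp [isolateVarEquiv_apply, optionEquivLeft_X_none]
    · simp [isolateVarEquiv_apply, Equiv.optionSubtypeNe_symm_of_ne hj, optionEquivLeft_X_some,
        hx ⟨j, hj⟩]

end isolateVar

theorem not_dvd_pderiv [CommRing R] [IsDomain R] [CharZero R] {p : MvPolynomial σ R} {i : σ}
    (hi : 0 < p.degreeOf i) : ¬ p ∣ pderiv i p := by
  classical
  intro hdvd
  have hdvd' := map_dvd (isolateVarEquiv R i) hdvd
  rw [isolateVarEquiv_pderiv] at hdvd'
  exact Polynomial.not_dvd_derivative (by rw [natDegree_isolateVarEquiv]; omega) hdvd'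

theorem not_dvd_mul_pderiv [CommRing R] [IsDomain R] [CharZero R] {p q : MvPolynomial σ R}
    {i : σ} (hp : Prime p) (hpq : IsRelPrime p q) (hi : 0 < p.degreeOf i) :
    ¬ p ∣ q * pderiv i p := fun hdvd =>
  (hp.dvd_or_dvd hdvd).elim (fun hpq' => hp.not_isUnit (hpq dvd_rfl hpq')) (not_dvd_pderiv hi)

end MvPolynomial

open MvPolynomial in
/-- For coprime `g, h ∈ k[X₁,…,Xₙ]` over a field of characteristic zero with `g`
irreducible of degree `d ≥ 1`, there is a field extension `k₁/k` of degree at most `d`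
and a point `p ∈ k₁ⁿ` with `g(p) = 0`, `h(p) ≠ 0` and `grad g(p) ≠ 0`. -/
theorem exists_field_extension_point {k : Type} [Field k] [CharZero k]
    (n d : ℕ) (g h : MvPolynomial (Fin n) k)
    (hcop : IsRelPrime g h) (hirr : Irreducible g)
    (hdeg : g.totalDegree = d) (hd : 1 ≤ d) :
    ∃ (k₁ : Type) (_ : Field k₁) (_ : Algebra k k₁),
      FiniteDimensional k k₁ ∧ Module.finrank k k₁ ≤ d ∧
      ∃ p : Fin n → k₁,
        MvPolynomial.aeval p g = 0 ∧
        MvPolynomial.aeval p h ≠ 0 ∧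
        ∃ i : Fin n, MvPolynomial.aeval p (MvPolynomial.pderiv i g) ≠ 0 := by
  obtain ⟨i, hi⟩ := exists_degreeOf_pos (p := g) (by omega)
  set Φ := isolateVarEquiv k i
  have hG : (Φ g).natDegree = g.degreeOf i := natDegree_isolateVarEquiv i g
  obtain ⟨c, hc, a, b, hab⟩ :=
    Polynomial.exists_mul_add_mul_eq_C_of_not_dvd (q := Φ (h * pderiv i g))
      ((MulEquiv.irreducible_iff Φ.toMulEquiv).mpr hirr) (hG ▸ hi.ne')
      fun hdvd => not_dvd_mul_pderiv hirr.prime hcop hi (by simpa using map_dvd Φ.symm hdvd)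
  obtain ⟨q, hq⟩ := exists_eval_ne_zero (mul_ne_zero hc
    (Polynomial.leadingCoeff_ne_zero.mpr (Φ.injective.ne hirr.ne_zero)))
  rw [map_mul] at hq
  have hGq : ((Φ g).map (eval q)).natDegree = g.degreeOf i :=
    hG ▸ Polynomial.natDegree_map_of_leadingCoeff_ne_zero _ (right_ne_zero_of_mul hq)
  obtain ⟨k₁, _, _, hfin, hrank, α, hα⟩ :=
    Polynomial.exists_aeval_eq_zero_finrank_le (p := (Φ g).map (eval q)) (by omega)
  let x : Fin n → k₁ := fun j => if hj : j = i then α else algebraMap k k₁ (q ⟨j, hj⟩)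
  have hx (f : MvPolynomial (Fin n) k) : aeval x f = Polynomial.aeval α ((Φ f).map (eval q)) := by
    have hxi : x i = α := dif_pos rfl
    rw [aeval_eq_aeval_map_isolateVarEquiv i q (fun j => dif_neg j.2), hxi]
  have hF : aeval x (h * pderiv i g) ≠ 0 := by
    rw [hx]
    exact Polynomial.aeval_map_ne_zero_of_mul_add_mul_eq_C _ hab (left_ne_zero_of_mul hq) hα
  rw [map_mul] at hF
  refine ⟨k₁, _, _, hfin, ?_, x, by rw [hx]; exact hα, left_ne_zero_of_mul hF, i,
    right_ne_zero_of_mul hF⟩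
  calc Module.finrank k k₁ ≤ g.degreeOf i := hGq ▸ hrank
    _ ≤ d := hdeg ▸ degreeOf_le_totalDegree g i
end

section
/- Let k be an algebraically closed field and g, h ∈ k[X₁,…,Xₙ] coprime polynomials with g irreducible and nonconstant. Then there exists a point p ∈ kⁿ with g(p) = 0, h(p) ≠ 0, and grad g(p) ≠ 0, provided char k = 0. -/
/-!
If `g` had no smooth point off `h = 0`, every `h * ∂ᵢg` would vanish on `V(g)`. By the
Nullstellensatz, and since `(g)` is prime, `g ∣ h * ∂ᵢg`, hence `g ∣ ∂ᵢg` as `g ∤ h`. But `∂ᵢg`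
has smaller degree in `Xᵢ` than `g`, so `∂ᵢg = 0` for every `i`, and in characteristic zero this
forces `g` to be constant.
-/

namespace MvPolynomial

section CommSemiring

variable {σ R : Type*} [CommSemiring R] {p q : MvPolynomial σ R}

theorem degreeOf_pderiv_add_one_le (i : σ) {m : σ →₀ ℕ} (hm : m ∈ (pderiv i p).support) :
    m i + 1 ≤ degreeOf i p := by
  classical
  have hcoeff : coeff (m + Finsupp.single i 1) p ≠ 0 := by
    intro h0
    rw [mem_support_iff, coeff_pderiv, h0, zero_mul] at hm
    exact hm rfl
  simpa using le_degreeOf_of_mem_support i (mem_support_iff.mpr hcoeff)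

theorem degreeOf_pderiv_lt {i : σ} (hp : pderiv i p ≠ 0) :
    degreeOf i (pderiv i p) < degreeOf i p := by
  obtain ⟨m, hm⟩ := support_nonempty.mpr hp
  rw [degreeOf_lt_iff (by have := degreeOf_pderiv_add_one_le i hm; omega)]
  exact fun m' hm' ↦ degreeOf_pderiv_add_one_le i hm'

variable [NoZeroDivisors R]

theorem degreeOf_le_of_dvd (i : σ) (hpq : p ∣ q) (hq : q ≠ 0) : degreeOf i p ≤ degreeOf i q := by
  obtain ⟨r, rfl⟩ := hpq
  rw [degreeOf_mul_eq (left_ne_zero_of_mul hq) (right_ne_zero_of_mul hq)]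
  exact Nat.le_add_right _ _

theorem pderiv_eq_zero_of_dvd_pderiv {i : σ} (hp : p ∣ pderiv i p) : pderiv i p = 0 := by
  by_contra hne
  exact (degreeOf_le_of_dvd i hp hne).not_gt (degreeOf_pderiv_lt hne)

theorem totalDegree_eq_zero_of_forall_pderiv_eq_zero [CharZero R]
    (hp : ∀ i, pderiv i p = 0) : p.totalDegree = 0 := by
  classical
  rw [totalDegree_eq_zero_iff]
  intro m hm i
  by_contra hmi
  have hm_eq : m - Finsupp.single i 1 + Finsupp.single i 1 = m := by
    ext j
    rcases eq_or_ne j i with rfl | hji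
    · simp only [Finsupp.coe_add, Finsupp.coe_tsub, Pi.add_apply, Pi.sub_apply,
        Finsupp.single_eq_same]
      omega
    · simp [Finsupp.single_eq_of_ne hji]
  have hcoeff := coeff_pderiv (i := i) p (m - Finsupp.single i 1)
  rw [hp i, coeff_zero, hm_eq] at hcoeff
  exact mem_support_iff.mp hm <|
    (mul_eq_zero.mp hcoeff.symm).resolve_right (Nat.cast_add_one_ne_zero _)

end CommSemiring

theorem dvd_of_forall_eval_eq_zero {σ k : Type*} [Field k] [IsAlgClosed k] [Finite σ]
    {g p : MvPolynomial σ k} (hg : Prime g) (hp : ∀ x, eval x g = 0 → eval x p = 0) :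
    g ∣ p := by
  have hprime : (Ideal.span {g}).IsPrime := (Ideal.span_singleton_prime hg.ne_zero).mpr hg
  have hmem : p ∈ vanishingIdeal k (zeroLocus k (Ideal.span {g})) := fun x hx ↦
    hp x (hx g (Ideal.subset_span rfl))
  rwa [vanishingIdeal_zeroLocus_eq_radical, hprime.radical, Ideal.mem_span_singleton] at hmem

end MvPolynomial

open MvPolynomial

/-- Over an algebraically closed field of characteristic zero, for coprime `g, h` with `g`
irreducible and nonconstant there is a point `p` with `g(p) = 0`, `h(p) ≠ 0`, and
`grad g(p) ≠ 0`. -/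
theorem exists_smooth_point_algClosed {k : Type} [Field k] [IsAlgClosed k] [CharZero k]
    (n : ℕ) (g h : MvPolynomial (Fin n) k)
    (hcop : IsRelPrime g h) (hirr : Irreducible g) (hnc : 0 < g.totalDegree) :
    ∃ p : Fin n → k,
      MvPolynomial.eval p g = 0 ∧
      MvPolynomial.eval p h ≠ 0 ∧
      ∃ i : Fin n, MvPolynomial.eval p (MvPolynomial.pderiv i g) ≠ 0 := by
  by_contra! hsing
  have hg : Prime g := hirr.prime
  have hgh : ¬ g ∣ h := fun hdvd ↦ hg.not_isUnit (hcop dvd_rfl hdvd)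
  have hdvd_pderiv (i : Fin n) : g ∣ pderiv i g := by
    refine (hg.dvd_mul.mp (dvd_of_forall_eval_eq_zero hg fun x hx ↦ ?_)).resolve_left hgh
    by_cases hhx : eval x h = 0
    · simp [hhx]
    · simp [hsing x hx hhx i]
  have hconst := totalDegree_eq_zero_of_forall_pderiv_eq_zero fun i ↦
    pderiv_eq_zero_of_dvd_pderiv (hdvd_pderiv i)
  omega
end

section
/- Let k be a field of characteristic zero, g ∈ k[X][Y] with g(0,0) = 0 and ∂_Y g(0,0) ≠ 0, and let φ ∈ k[[X]] be the unique power series with φ(0)=0 and g(X,φ(X))=0. Define the Newton iteration φ₀ = 0, φ_{ν+1} = φ_ν − g(X,φ_ν)/∂_Y g(X,φ_ν). Then each φ_ν is a well-defined element of k[[X]] and φ_ν ≡ φ mod (X)^{2^ν}, where (X) is the maximal ideal of k[[X]]. -/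
/-!
Write `e = Φ ν - φ`. Taylor expansion of `g(X, ·)` at `Φ ν`, evaluated at the root `φ`, gives
`g(X, Φ ν) = ∂_Y g(X, Φ ν) · e + O(e²)`, so the Newton step leaves an error `Φ (ν+1) - φ` that is a
multiple of `e²`; squaring doubles the exponent of `(X)`. The denominators stay units because
`Φ ν ≡ φ ≡ 0 mod (X)`, so the constant coefficient of `∂_Y g(X, Φ ν)` is `∂_Y g(0, 0) ≠ 0`, and
`(X)` is exactly the ideal of series with zero constant coefficient.
-/

open Polynomial

namespace MvPowerSeries

variable {σ R : Type*} [CommSemiring R]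

theorem constantCoeff_eq_zero_of_mem_span_range_X {f : MvPowerSeries σ R}
    (hf : f ∈ Ideal.span (Set.range (X : σ → MvPowerSeries σ R))) : constantCoeff f = 0 :=
  (Ideal.span_le (I := RingHom.ker constantCoeff)).2 (by rintro _ ⟨i, rfl⟩; simp) hf

theorem mem_span_range_X_of_constantCoeff_eq_zero [Finite σ] {f : MvPowerSeries σ R}
    (hf : constantCoeff f = 0) : f ∈ Ideal.span (Set.range (X : σ → MvPowerSeries σ R)) := by
  classical
  have := Fintype.ofFinite σ
  let _ : LinearOrder σ := LinearOrder.lift' _ (Fintype.equivFin σ).injective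
  -- the slice of `i` collects the monomials whose least variable is `i`, so `X i` divides it
  let slice : σ → MvPowerSeries σ R := fun i d => if d.support.min = i then coeff d f else 0
  have coeff_slice (i : σ) (d : σ →₀ ℕ) :
      coeff d (slice i) = if d.support.min = i then coeff d f else 0 := rfl
  have hsum : f = ∑ i, slice i := by
    ext d
    simp only [map_sum, coeff_slice]
    rcases eq_or_ne d 0 with rfl | hd
    · simpa using hf
    · obtain ⟨j, hj⟩ := Finset.min_of_nonempty (Finsupp.support_nonempty_iff.2 hd)
      simp [hj]
  have hslice (i : σ) : X i ∣ slice i := by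
    rw [X_dvd_iff]
    intro d hdi
    rw [coeff_slice, if_neg]
    exact fun h => Finsupp.mem_support_iff.1 (Finset.mem_of_min h) hdi
  rw [hsum]
  refine Ideal.sum_mem _ fun i _ => ?_
  obtain ⟨q, hq⟩ := hslice i
  exact hq ▸ Ideal.mul_mem_right _ _ (Ideal.subset_span ⟨i, rfl⟩)

theorem constantCoeff_eval₂_coeToMvPowerSeries (p : (MvPolynomial σ R)[X])
    {x : MvPowerSeries σ R} (hx : constantCoeff x = 0) :
    constantCoeff (p.eval₂ MvPolynomial.coeToMvPowerSeries.ringHom x) =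
      MvPolynomial.constantCoeff (p.coeff 0) := by
  rw [hom_eval₂, hx, eval₂_at_zero, RingHom.comp_apply,
    MvPolynomial.coeToMvPowerSeries.ringHom_apply, ← coeff_zero_eq_constantCoeff_apply,
    MvPolynomial.coeff_coe, MvPolynomial.constantCoeff_eq]

end MvPowerSeries

namespace Polynomial

variable {R : Type*} [CommRing R]

/-- Taylor expansion at `b` gives `0 = P(a) = P(b) + P'(b)(a - b) + k(a - b)²`, so the Newton
correction cancels the linear term. -/
theorem exists_newton_step_sub_root_eq_mul_sq (P : R[X]) {a b : R} (ha : P.eval a = 0)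
    (hb : IsUnit (P.derivative.eval b)) :
    ∃ c, b - P.eval b * Ring.inverse (P.derivative.eval b) - a = c * (b - a) ^ 2 := by
  obtain ⟨k, hk⟩ := P.binomExpansion b (a - b)
  rw [add_sub_cancel, ha] at hk
  refine ⟨k * Ring.inverse (P.derivative.eval b), ?_⟩
  linear_combination (a - b) * Ring.mul_inverse_cancel _ hb
    + Ring.inverse (P.derivative.eval b) * hk

theorem newton_iterate_sub_root_mem_pow_two_pow (P : R[X]) (I : Ideal R) {a : R}
    (ha : P.eval a = 0) (hunit : ∀ y, y - a ∈ I → IsUnit (P.derivative.eval y))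
    (x : ℕ → R) (hx0 : x 0 - a ∈ I)
    (hx : ∀ n, x (n + 1) = x n - P.eval (x n) * Ring.inverse (P.derivative.eval (x n)))
    (n : ℕ) : x n - a ∈ I ^ 2 ^ n := by
  induction n with
  | zero => simpa using hx0
  | succ n ih =>
    have hunit_n := hunit _ (Ideal.pow_le_self (pow_ne_zero _ two_ne_zero) ih)
    obtain ⟨c, hc⟩ := exists_newton_step_sub_root_eq_mul_sq P ha hunit_n
    rw [hx, hc, pow_succ, pow_mul]
    exact Ideal.mul_mem_left _ _ (Ideal.pow_mem_pow ih 2)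

end Polynomial

theorem newton_iteration_quadratic_convergence_general {k : Type} [Field k] (m : ℕ)
    (g : Polynomial (MvPolynomial (Fin m) k))
    (hgY00 : MvPolynomial.constantCoeff ((Polynomial.derivative g).coeff 0) ≠ 0)
    (φ : MvPowerSeries (Fin m) k)
    (hφ0 : MvPowerSeries.constantCoeff φ = 0)
    (hφroot : Polynomial.eval₂ MvPolynomial.coeToMvPowerSeries.ringHom φ g = 0)
    (Φ : ℕ → MvPowerSeries (Fin m) k)
    (hΦ0 : Φ 0 = 0)
    (hΦrec : ∀ ν, Φ (ν + 1) = Φ ν -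
      (Polynomial.eval₂ MvPolynomial.coeToMvPowerSeries.ringHom (Φ ν) g) *
        Ring.inverse (Polynomial.eval₂ MvPolynomial.coeToMvPowerSeries.ringHom (Φ ν)
          (Polynomial.derivative g))) :
    ∀ ν, IsUnit (Polynomial.eval₂ MvPolynomial.coeToMvPowerSeries.ringHom (Φ ν)
          (Polynomial.derivative g)) ∧
      Φ ν - φ ∈ (Ideal.span (Set.range (MvPowerSeries.X : Fin m → MvPowerSeries (Fin m) k)))
          ^ (2 ^ ν) := by
  set ι := MvPolynomial.coeToMvPowerSeries.ringHom (σ := Fin m) (R := k)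
  set I := Ideal.span (Set.range (MvPowerSeries.X : Fin m → MvPowerSeries (Fin m) k))
  have hunit (y : MvPowerSeries (Fin m) k) (hy : y - φ ∈ I) :
      IsUnit ((g.map ι).derivative.eval y) := by
    have hy0 : MvPowerSeries.constantCoeff y = 0 := by
      simpa [hφ0] using MvPowerSeries.constantCoeff_eq_zero_of_mem_span_range_X hy
    rw [derivative_map, eval_map, MvPowerSeries.isUnit_iff_constantCoeff,
      MvPowerSeries.constantCoeff_eval₂_coeToMvPowerSeries _ hy0]
    exact hgY00.isUnit
  have hmem := (g.map ι).newton_iterate_sub_root_mem_pow_two_pow I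
    (by rwa [eval_map]) hunit Φ
    (by simpa [hΦ0] using MvPowerSeries.mem_span_range_X_of_constantCoeff_eq_zero hφ0)
    (by simpa only [eval_map, derivative_map] using hΦrec)
  intro ν
  refine ⟨?_, hmem ν⟩
  simpa only [derivative_map, eval_map] using
    hunit _ (Ideal.pow_le_self (pow_ne_zero _ two_ne_zero) (hmem ν))

/-- Newton iteration for the formal implicit function theorem: with
`φ₀ = 0`, `φ_{ν+1} = φ_ν − g(X,φ_ν)/∂_Y g(X,φ_ν)`, each iterate is well defined
(the denominator is a unit in `k[[X]]`) and `φ_ν ≡ φ mod (X)^{2^ν}`. -/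
theorem newton_iteration_quadratic_convergence {k : Type} [Field k] [CharZero k] (m : ℕ)
    (g : Polynomial (MvPolynomial (Fin m) k))
    (hg00 : MvPolynomial.constantCoeff (g.coeff 0) = 0)
    (hgY00 : MvPolynomial.constantCoeff ((Polynomial.derivative g).coeff 0) ≠ 0)
    (φ : MvPowerSeries (Fin m) k)
    (hφ0 : MvPowerSeries.constantCoeff φ = 0)
    (hφroot : Polynomial.eval₂ MvPolynomial.coeToMvPowerSeries.ringHom φ g = 0)
    (Φ : ℕ → MvPowerSeries (Fin m) k)
    (hΦ0 : Φ 0 = 0)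
    (hΦrec : ∀ ν, Φ (ν + 1) = Φ ν -
      (Polynomial.eval₂ MvPolynomial.coeToMvPowerSeries.ringHom (Φ ν) g) *
        Ring.inverse (Polynomial.eval₂ MvPolynomial.coeToMvPowerSeries.ringHom (Φ ν)
          (Polynomial.derivative g))) :
    ∀ ν, IsUnit (Polynomial.eval₂ MvPolynomial.coeToMvPowerSeries.ringHom (Φ ν)
          (Polynomial.derivative g)) ∧
      Φ ν - φ ∈ (Ideal.span (Set.range (MvPowerSeries.X : Fin m → MvPowerSeries (Fin m) k)))
          ^ (2 ^ ν) :=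
  newton_iteration_quadratic_convergence_general m g hgY00 φ hφ0 hφroot Φ hΦ0 hΦrec
end

section
/- Let f = g^e h with g, h ∈ k[X₁,…,Xₙ] coprime, e ≥ 1, char k = 0, g(0,0)=0, h(0,0)·∂_Y g(0,0) ≠ 0 (writing Y = Xₙ). Define F(X,Y) := f(X, Y+ε) − f(0,ε) over k(ε). Then ∂_Y F(0,0) = e·λ^e·h(0,0)·ε^{e−1} + O(ε^e) where g(0,ε) = λε + O(ε²) with λ = ∂_Y g(0,0) ≠ 0; in particular ∂_Y F(0,0) ≠ 0 in k(ε). -/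
/-!
On the `Y`-axis, `∂_Y F(0,0)` is the derivative at `Y = ε` of `f(0, Y) = G^e H` with
`G = g(0, Y)` and `H = h(0, Y)`. Since `G(0) = 0`, write `G = Y G₁` with `G₁(0) = λ`; then
`(Y^e G₁^e H)' = e Y^(e-1) G₁^e H + Y^e (…)`, whose lowest term is `e λ^e h(0) Y^(e-1)`.
-/

open MvPolynomial

namespace Polynomial

variable {R : Type*} [CommRing R]

theorem X_pow_dvd_derivative_X_pow_mul_sub (P : R[X]) (e : ℕ) :
    X ^ e ∣ derivative (X ^ e * P) - C (e * P.coeff 0) * X ^ (e - 1) := by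
  rcases Nat.eq_zero_or_pos e with rfl | he
  · simp
  obtain ⟨Q, hQ⟩ := X_dvd_sub_C (p := P)
  have hXe : (X : R[X]) ^ e = X ^ (e - 1) * X := by rw [← pow_succ, Nat.sub_add_cancel he]
  refine ⟨C (e : R) * Q + derivative P, ?_⟩
  rw [derivative_mul, derivative_X_pow, C_mul, map_natCast, hXe]
  linear_combination (e : R[X]) * X ^ (e - 1) * hQ

theorem X_pow_dvd_derivative_pow_mul_sub {G : R[X]} (hG : G.coeff 0 = 0) (H : R[X]) (e : ℕ) :
    X ^ e ∣ derivative (G ^ e * H) - C (e * G.coeff 1 ^ e * H.coeff 0) * X ^ (e - 1) := by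
  have hG' : G = X * G.divX := by simpa [hG] using (X_mul_divX_add G).symm
  have h := X_pow_dvd_derivative_X_pow_mul_sub (G.divX ^ e * H) e
  rwa [mul_coeff_zero, coeff_zero_eq_eval_zero (_ ^ e), eval_pow, ← coeff_zero_eq_eval_zero,
    coeff_divX, zero_add, ← mul_assoc, ← mul_assoc, ← mul_pow, ← hG'] at h

theorem coeff_pred_eq_of_X_pow_dvd_sub {D : R[X]} {c : R} {e : ℕ} (he : 1 ≤ e)
    (h : X ^ e ∣ D - C c * X ^ (e - 1)) : D.coeff (e - 1) = c := by
  have := X_pow_dvd_iff.mp h (e - 1) (by omega)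
  rwa [coeff_sub, coeff_C_mul_X_pow, if_pos rfl, sub_eq_zero] at this

end Polynomial

namespace MvPolynomial

variable {R σ : Type*} [CommSemiring R] [DecidableEq σ]

/-- `q (0, …, 0, T, 0, …, 0)`, with `T` in position `i`; in the paper's notation `g(0, ε)`. -/
noncomputable def axisRestriction (i : σ) : MvPolynomial σ R →ₐ[R] Polynomial R :=
  aeval fun j => if j = i then Polynomial.X else 0

theorem aeval_axisRestriction {S : Type*} [CommSemiring S] [Algebra R S] (i : σ) (t : S)
    (q : MvPolynomial σ R) :
    Polynomial.aeval t (axisRestriction i q) = aeval (fun j => if j = i then t else 0) q := by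
  rw [axisRestriction, ← AlgHom.comp_apply, comp_aeval]
  congr 2
  funext j
  split_ifs <;> simp

theorem coeff_zero_axisRestriction (i : σ) (q : MvPolynomial σ R) :
    (axisRestriction i q).coeff 0 = eval (fun _ => 0) q := by
  rw [Polynomial.coeff_zero_eq_eval_zero, ← Polynomial.coe_aeval_eq_eval,
    aeval_axisRestriction, ← coe_aeval_eq_eval]
  simp

theorem derivative_axisRestriction (i : σ) (q : MvPolynomial σ R) :
    Polynomial.derivative (axisRestriction i q) = axisRestriction i (pderiv i q) := by
  induction q using MvPolynomial.induction_on with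
  | C a => simp [axisRestriction]
  | add p q hp hq => simp only [map_add, hp, hq]
  | mul_X p j hp =>
    rw [map_mul, pderiv_mul, Polynomial.derivative_mul, hp, map_add, map_mul, map_mul]
    by_cases hj : j = i
    · subst hj
      simp [axisRestriction]
    · simp [axisRestriction, hj]

theorem coeff_one_axisRestriction (i : σ) (q : MvPolynomial σ R) :
    (axisRestriction i q).coeff 1 = eval (fun _ => 0) (pderiv i q) := by
  rw [← coeff_zero_axisRestriction, ← derivative_axisRestriction, Polynomial.coeff_derivative]
  simp

theorem pderiv_bind₁_shift (i : σ) (t : R) (q : MvPolynomial σ R) :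
    pderiv i (bind₁ (fun j => if j = i then X j + C t else X j) q) =
      bind₁ (fun j => if j = i then X j + C t else X j) (pderiv i q) := by
  induction q using MvPolynomial.induction_on with
  | C a => simp
  | add p q hp hq => simp only [map_add, hp, hq]
  | mul_X p j hp =>
    by_cases hj : j = i
    · subst hj
      simp [hp]
    · simp [hp, hj]

theorem eval_zero_bind₁_shift (i : σ) (t : R) (q : MvPolynomial σ R) :
    eval (fun _ => 0) (bind₁ (fun j => if j = i then X j + C t else X j) q) =
      eval (fun j => if j = i then t else 0) q := by
  refine (eval₂Hom_bind₁ _ _ _ q).trans ?_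
  congr 2
  funext j
  split_ifs <;> simp

theorem eval_pderiv_bind₁_shift_map {S : Type*} [CommSemiring S] [Algebra R S] (i : σ) (t : S)
    (p : MvPolynomial σ R) :
    eval (fun _ => 0)
        (pderiv i (bind₁ (fun j => if j = i then X j + C t else X j) (map (algebraMap R S) p))) =
      Polynomial.aeval t (Polynomial.derivative (axisRestriction i p)) := by
  rw [pderiv_bind₁_shift, eval_zero_bind₁_shift, pderiv_map, eval_map, derivative_axisRestriction,
    aeval_axisRestriction, aeval_def]

end MvPolynomial

theorem perturbed_partial_derivative_general {k : Type} [Field k] [CharZero k] (n : ℕ)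
    (f g h : MvPolynomial (Fin (n + 1)) k) (e : ℕ) (he : 1 ≤ e)
    (hf : f = g ^ e * h)
    (hg00 : eval (fun _ => (0 : k)) g = 0)
    (hmix : eval (fun _ => (0 : k)) h *
      eval (fun _ => (0 : k)) (pderiv (Fin.last n) g) ≠ 0) :
    let K := RatFunc k
    let fK : MvPolynomial (Fin (n + 1)) K := map (algebraMap k K) f
    let F : MvPolynomial (Fin (n + 1)) K :=
      bind₁ (fun i => if i = Fin.last n then X i + C RatFunc.X else X i) fK -
        C (eval (fun i => if i = Fin.last n then RatFunc.X else 0) fK)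
    let lam : k := eval (fun _ => (0 : k)) (pderiv (Fin.last n) g)
    let h00 : k := eval (fun _ => (0 : k)) h
    (∃ u : Polynomial k,
      eval (fun _ => (0 : K)) (pderiv (Fin.last n) F) =
        algebraMap (Polynomial k) K
          (Polynomial.C ((e : k) * lam ^ e * h00) * Polynomial.X ^ (e - 1) +
            Polynomial.X ^ e * u)) ∧
    eval (fun _ => (0 : K)) (pderiv (Fin.last n) F) ≠ 0 := by
  intro K fK F lam h00
  set D := Polynomial.derivative (axisRestriction (Fin.last n) f)
  have hF : eval (fun _ => (0 : K)) (pderiv (Fin.last n) F) = algebraMap (Polynomial k) K D := by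
    rw [map_sub, pderiv_C, sub_zero, eval_pderiv_bind₁_shift_map,
      RatFunc.aeval_X_left_eq_algebraMap]
  obtain ⟨u, hu⟩ : Polynomial.X ^ e ∣ D - Polynomial.C ((e : k) * lam ^ e * h00) *
      Polynomial.X ^ (e - 1) := by
    have hg0 : (axisRestriction (Fin.last n) g).coeff 0 = 0 := by
      rw [coeff_zero_axisRestriction, hg00]
    simpa only [D, hf, map_mul, map_pow, coeff_one_axisRestriction, coeff_zero_axisRestriction]
      using Polynomial.X_pow_dvd_derivative_pow_mul_sub hg0 (axisRestriction (Fin.last n) h) e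
  refine ⟨⟨u, by rw [hF, ← hu, add_sub_cancel]⟩, ?_⟩
  have hc : (e : k) * lam ^ e * h00 ≠ 0 :=
    mul_ne_zero (mul_ne_zero (Nat.cast_ne_zero.mpr (by omega))
      (pow_ne_zero e (right_ne_zero_of_mul hmix))) (left_ne_zero_of_mul hmix)
  rw [hF, map_ne_zero_iff _ (RatFunc.algebraMap_injective k)]
  intro hD
  apply hc
  rw [← Polynomial.coeff_pred_eq_of_X_pow_dvd_sub he ⟨u, hu⟩, hD, Polynomial.coeff_zero]

/-- Perturbation lemma: for `f = g^e h` with `g, h` coprime, `g(0,0) = 0`,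
`h(0,0)·∂_Y g(0,0) ≠ 0` (`Y = Xₙ`), the perturbed polynomial
`F(X,Y) := f(X, Y+ε) − f(0,ε)` over `k(ε)` satisfies
`∂_Y F(0,0) = e·λ^e·h(0,0)·ε^{e−1} + O(ε^e)` with `λ = ∂_Y g(0,0)`;
in particular `∂_Y F(0,0) ≠ 0`. -/
theorem perturbed_partial_derivative {k : Type} [Field k] [CharZero k] (n : ℕ)
    (f g h : MvPolynomial (Fin (n + 1)) k) (e : ℕ) (he : 1 ≤ e)
    (hf : f = g ^ e * h) (hcop : IsRelPrime g h)
    (hg00 : eval (fun _ => (0 : k)) g = 0)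
    (hmix : eval (fun _ => (0 : k)) h *
      eval (fun _ => (0 : k)) (pderiv (Fin.last n) g) ≠ 0) :
    let K := RatFunc k
    let fK : MvPolynomial (Fin (n + 1)) K := map (algebraMap k K) f
    let F : MvPolynomial (Fin (n + 1)) K :=
      bind₁ (fun i => if i = Fin.last n then X i + C RatFunc.X else X i) fK -
        C (eval (fun i => if i = Fin.last n then RatFunc.X else 0) fK)
    let lam : k := eval (fun _ => (0 : k)) (pderiv (Fin.last n) g)
    let h00 : k := eval (fun _ => (0 : k)) h
    (∃ u : Polynomial k,
      eval (fun _ => (0 : K)) (pderiv (Fin.last n) F) =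
        algebraMap (Polynomial k) K
          (Polynomial.C ((e : k) * lam ^ e * h00) * Polynomial.X ^ (e - 1) +
            Polynomial.X ^ e * u)) ∧
    eval (fun _ => (0 : K)) (pderiv (Fin.last n) F) ≠ 0 :=
  perturbed_partial_derivative_general n f g h e he hf hg00 hmix
end

section
/- Let A and B be polynomials in k(X)[T,Y], both monic of the same degree d ≥ 1 in Y, with deg_T A ≤ d and deg_T B ≤ d, and suppose A is irreducible as a polynomial in Y over k(X,T). If there exists ψ ∈ k(X)[T] such that A(T,ψ) ≡ 0 mod T^{2d²+1} and B(T,ψ) ≡ 0 mod T^{2d²+1}, then A = B. -/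
/-!
If `A ≠ B`, irreducibility of `A` over `k(X)(T)` makes `A` and `B` coprime there, so their
resultant `R = res_Y(A, B) ∈ k(X)[T]` is nonzero. Since `R = uA + vB` with `u, v ∈ k(X)[T][Y]`,
substituting `Y = ψ` shows `T^(2d²+1) ∣ R`; but `R` is the determinant of the `2d × 2d`
Sylvester matrix, whose entries have `T`-degree at most `d`, so `deg_T R ≤ 2d²`.
-/

open Polynomial

theorem Matrix.natDegree_det_le_sum {n R : Type*} [DecidableEq n] [Fintype n] [CommRing R]
    (M : Matrix n n R[X]) (b : n → ℕ) (hM : ∀ i j, (M i j).natDegree ≤ b j) :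
    M.det.natDegree ≤ ∑ j, b j := by
  rw [Matrix.det_apply']
  refine natDegree_sum_le_of_forall_le _ _ fun σ _ => ?_
  calc natDegree ((Equiv.Perm.sign σ : R[X]) * ∏ i, M (σ i) i)
      ≤ natDegree (Equiv.Perm.sign σ : R[X]) + natDegree (∏ i, M (σ i) i) := natDegree_mul_le
    _ ≤ 0 + ∑ i, natDegree (M (σ i) i) := by
      gcongr
      · simp
      · exact natDegree_prod_le _ _
    _ ≤ ∑ j, b j := by
      rw [zero_add]
      exact Finset.sum_le_sum fun i _ => hM _ _

theorem Polynomial.natDegree_resultant_le {R : Type*} [CommRing R] {f g : R[X][X]} {bf bg : ℕ}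
    (hf : ∀ i, (f.coeff i).natDegree ≤ bf) (hg : ∀ i, (g.coeff i).natDegree ≤ bg)
    (m n : ℕ) : (resultant f g m n).natDegree ≤ m * bg + n * bf := by
  calc (resultant f g m n).natDegree
      ≤ ∑ j : Fin (m + n), Fin.addCases (fun _ => bg) (fun _ => bf) j :=
        Matrix.natDegree_det_le_sum _ _ fun i j => by
          induction j using Fin.addCases with
          | left j =>
            simp only [sylvester, Matrix.of_apply, Fin.addCases_left]
            split_ifs <;> simp [hg]
          | right j =>
            simp only [sylvester, Matrix.of_apply, Fin.addCases_right]
            split_ifs <;> simp [hf]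
    _ = m * bg + n * bf := by simp [Fin.sum_univ_add]

theorem Polynomial.dvd_resultant_of_dvd_eval {R : Type*} [CommRing R] {f g : R[X]} {m n : ℕ}
    (hf : f.natDegree ≤ m) (hg : g.natDegree ≤ n) (hmn : m ≠ 0 ∨ n ≠ 0) {x r : R}
    (hfx : r ∣ f.eval x) (hgx : r ∣ g.eval x) : r ∣ resultant f g m n := by
  obtain ⟨p, q, -, -, h⟩ := exists_mul_add_mul_eq_C_resultant f g hf hg hmn
  have := congrArg (eval x) h
  rw [eval_C, eval_add, eval_mul, eval_mul] at this
  exact this ▸ dvd_add (hfx.mul_right _) (hgx.mul_right _)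

theorem Polynomial.resultant_ne_zero_of_isCoprime_map {R S : Type*} [CommRing R] [CommRing S]
    [IsDomain S] {φ : R →+* S} (hφ : Function.Injective φ) {f g : R[X]}
    (h : IsCoprime (f.map φ) (g.map φ)) : resultant f g ≠ 0 := by
  have := resultant_ne_zero _ _ h
  rw [natDegree_map_eq_of_injective hφ, natDegree_map_eq_of_injective hφ,
    resultant_map_map] at this
  exact fun h0 => this (h0 ▸ map_zero φ)

theorem Polynomial.Monic.isCoprime_map_of_irreducible {R K : Type*} [CommRing R] [Field K]
    {φ : R →+* K} (hφ : Function.Injective φ) {f g : R[X]} (hf : f.Monic) (hg : g.Monic)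
    (hdeg : g.natDegree ≤ f.natDegree) (hirr : Irreducible (f.map φ)) (hne : f ≠ g) :
    IsCoprime (f.map φ) (g.map φ) :=
  hirr.coprime_iff_not_dvd.mpr fun hdvd => hne <| map_injective φ hφ <|
    (eq_of_monic_of_dvd_of_natDegree_le (hf.map φ) (hg.map φ) hdvd
      (by rwa [natDegree_map_eq_of_injective hφ, natDegree_map_eq_of_injective hφ])).symm

theorem minimal_polynomial_reconstruction_general {k : Type} [Field k] (m : ℕ) (d : ℕ)
    (A B : Polynomial (Polynomial (FractionRing (MvPolynomial (Fin m) k))))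
    (hAmonic : A.Monic) (hBmonic : B.Monic)
    (hAdeg : A.natDegree = d) (hBdeg : B.natDegree = d)
    (hAT : ∀ i, (A.coeff i).natDegree ≤ d) (hBT : ∀ i, (B.coeff i).natDegree ≤ d)
    (hAirr : Irreducible (A.map (algebraMap
      (Polynomial (FractionRing (MvPolynomial (Fin m) k)))
      (FractionRing (Polynomial (FractionRing (MvPolynomial (Fin m) k)))))))
    (ψ : Polynomial (FractionRing (MvPolynomial (Fin m) k)))
    (hψA : (Polynomial.X : Polynomial (FractionRing (MvPolynomial (Fin m) k))) ^
      (2 * d ^ 2 + 1) ∣ Polynomial.eval ψ A)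
    (hψB : (Polynomial.X : Polynomial (FractionRing (MvPolynomial (Fin m) k))) ^
      (2 * d ^ 2 + 1) ∣ Polynomial.eval ψ B) :
    A = B := by
  have hinj := IsFractionRing.injective (Polynomial (FractionRing (MvPolynomial (Fin m) k)))
    (FractionRing (Polynomial (FractionRing (MvPolynomial (Fin m) k))))
  have hd : d ≠ 0 := by
    have := hAirr.natDegree_pos
    rw [natDegree_map_eq_of_injective hinj, hAdeg] at this
    exact this.ne'
  by_contra hne
  have hres : resultant A B ≠ 0 := resultant_ne_zero_of_isCoprime_map hinj <|
    hAmonic.isCoprime_map_of_irreducible hinj hBmonic (hBdeg.trans hAdeg.symm).le hAirr hne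
  have hdvd : X ^ (2 * d ^ 2 + 1) ∣ resultant A B :=
    dvd_resultant_of_dvd_eval le_rfl le_rfl (.inl (hAdeg ▸ hd)) hψA hψB
  have hdeg : (resultant A B).natDegree ≤ 2 * d ^ 2 := by
    calc (resultant A B).natDegree ≤ A.natDegree * d + B.natDegree * d :=
          natDegree_resultant_le hAT hBT _ _
      _ = 2 * d ^ 2 := by rw [hAdeg, hBdeg]; ring
  have hlow : 2 * d ^ 2 + 1 ≤ (resultant A B).natDegree := by
    simpa only [natDegree_X_pow] using natDegree_le_of_dvd hdvd hres
  omega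

/-- Two polynomials `A, B ∈ k(X)[T,Y]`, monic of the same degree `d ≥ 1` in `Y`, of
`T`-degree at most `d`, with `A` irreducible over `k(X,T)`, which share an approximate
common root `ψ` modulo `T^{2d²+1}`, must be equal. -/
theorem minimal_polynomial_reconstruction {k : Type} [Field k] (m : ℕ) (d : ℕ) (hd : 1 ≤ d)
    (A B : Polynomial (Polynomial (FractionRing (MvPolynomial (Fin m) k))))
    (hAmonic : A.Monic) (hBmonic : B.Monic)
    (hAdeg : A.natDegree = d) (hBdeg : B.natDegree = d)
    (hAT : ∀ i, (A.coeff i).natDegree ≤ d) (hBT : ∀ i, (B.coeff i).natDegree ≤ d)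
    (hAirr : Irreducible (A.map (algebraMap
      (Polynomial (FractionRing (MvPolynomial (Fin m) k)))
      (FractionRing (Polynomial (FractionRing (MvPolynomial (Fin m) k)))))))
    (ψ : Polynomial (FractionRing (MvPolynomial (Fin m) k)))
    (hψA : (Polynomial.X : Polynomial (FractionRing (MvPolynomial (Fin m) k))) ^
      (2 * d ^ 2 + 1) ∣ Polynomial.eval ψ A)
    (hψB : (Polynomial.X : Polynomial (FractionRing (MvPolynomial (Fin m) k))) ^
      (2 * d ^ 2 + 1) ∣ Polynomial.eval ψ B) :
    A = B :=
  minimal_polynomial_reconstruction_general m d A B hAmonic hBmonic hAdeg hBdeg hAT hBT hAirr ψ hψA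
    hψB
end

section
/- Define f_n := ∏_{i=1}^{n} (Σ_{j=1}^{n} X_{ij} Y^{2^{j−1}}) ∈ k[X_{ij}, Y]. Then the coefficient of Y^{2ⁿ−1} in f_n, as a polynomial in the variables X_{ij}, equals the permanent of the n×n matrix (X_{ij}). -/
/-!
Expanding the product, the coefficient of `Y ^ (2 ^ n - 1)` is the sum of `∏ i, X (i, g i)` over
the maps `g : Fin n → Fin n` with `∑ i, 2 ^ g i = 2 ^ n - 1`. A sum of `m` powers of two has at
most `m` binary digits equal to one, and fewer if an exponent repeats, since `2 ^ a + 2 ^ a` can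
be merged into `2 ^ (a + 1)`. As `2 ^ n - 1` has `n` such digits, the admissible `g` are exactly
the bijections, and the sum over them is the permanent.
-/

open Finset Polynomial

theorem Finset.length_bitIndices_sum_two_pow (s : Finset ℕ) :
    (∑ i ∈ s, 2 ^ i).bitIndices.length = #s := by
  rw [← List.toFinset_card_of_nodup Nat.bitIndices_nodup, toFinset_bitIndices_sum_two_pow]

theorem Nat.length_bitIndices_two_pow_sub_one (n : ℕ) : (2 ^ n - 1).bitIndices.length = n := by
  simpa [Nat.geomSum_eq le_rfl] using (range n).length_bitIndices_sum_two_pow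

namespace Multiset

theorem exists_card_lt_sum_map_two_pow_eq {m : Multiset ℕ} (hm : ¬ m.Nodup) :
    ∃ m' : Multiset ℕ, card m' < card m ∧ (m'.map (2 ^ ·)).sum = (m.map (2 ^ ·)).sum := by
  obtain ⟨a, t, rfl⟩ : ∃ a t, m = a ::ₘ a ::ₘ t := by
    simpa [nodup_iff_ne_cons_cons] using hm
  refine ⟨(a + 1) ::ₘ t, by simp, ?_⟩
  simp only [map_cons, sum_cons, pow_succ]
  ring

theorem length_bitIndices_sum_map_two_pow_le (m : Multiset ℕ) :
    (m.map (2 ^ ·)).sum.bitIndices.length ≤ card m := by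
  induction hk : card m using Nat.strong_induction_on generalizing m with
  | _ k ih =>
  by_cases hm : m.Nodup
  · lift m to Finset ℕ using hm
    exact (Finset.length_bitIndices_sum_two_pow m).le.trans hk.le
  · obtain ⟨m', hlt, hsum⟩ := exists_card_lt_sum_map_two_pow_eq hm
    rw [← hsum]
    exact (ih _ (hk ▸ hlt) m' rfl).trans (hk ▸ hlt).le

theorem length_bitIndices_sum_map_two_pow_lt {m : Multiset ℕ} (hm : ¬ m.Nodup) :
    (m.map (2 ^ ·)).sum.bitIndices.length < card m := by
  obtain ⟨m', hlt, hsum⟩ := exists_card_lt_sum_map_two_pow_eq hm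
  exact hsum ▸ (length_bitIndices_sum_map_two_pow_le m').trans_lt hlt

end Multiset

theorem Function.injective_of_sum_two_pow_eq {ι : Type*} [Fintype ι] {g : ι → ℕ}
    (h : ∑ i, 2 ^ g i = 2 ^ Fintype.card ι - 1) : Function.Injective g := by
  have hnodup : (univ.val.map g).Nodup := by
    by_contra hm
    have hlt := Multiset.length_bitIndices_sum_map_two_pow_lt hm
    rw [Multiset.map_map] at hlt
    simp only [Function.comp_def, ← Finset.sum_eq_multiset_sum, h,
      Nat.length_bitIndices_two_pow_sub_one, Multiset.card_map, card_val, card_univ] at hlt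
    exact hlt.false
  intro i j hij
  exact (Multiset.nodup_map_iff_inj_on univ.nodup).mp hnodup i (mem_univ i) j (mem_univ j) hij

theorem Fin.sum_two_pow_eq_iff_bijective {n : ℕ} (g : Fin n → Fin n) :
    ∑ i, 2 ^ (g i : ℕ) = 2 ^ n - 1 ↔ Function.Bijective g := by
  constructor
  · intro h
    have := Function.injective_of_sum_two_pow_eq (g := fun i => (g i : ℕ)) (by simpa using h)
    exact Finite.injective_iff_bijective.mp (Function.Injective.of_comp this)
  · intro hg
    rw [hg.sum_comp (fun j : Fin n => 2 ^ (j : ℕ)), Fin.sum_univ_eq_sum_range (2 ^ ·),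
      Nat.geomSum_eq le_rfl]
    simp

theorem Polynomial.coeff_prod_sum_C_mul_X_pow {R ι κ : Type*} [CommSemiring R] [Fintype ι]
    [DecidableEq ι] [Fintype κ] (a : ι → κ → R) (e : κ → ℕ) (N : ℕ) :
    (∏ i, ∑ j, C (a i j) * X ^ e j).coeff N =
      ∑ g : ι → κ with ∑ i, e (g i) = N, ∏ i, a i (g i) := by
  rw [Fintype.prod_sum, finsetSum_coeff, sum_filter]
  refine sum_congr rfl fun g _ => ?_
  rw [prod_mul_distrib, ← map_prod, prod_pow_eq_pow_sum, coeff_C_mul_X_pow]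
  simp only [eq_comm]

theorem Matrix.permanent_eq_sum_bijective {n R : Type*} [Fintype n] [DecidableEq n]
    [CommSemiring R] [DecidablePred (Function.Bijective : (n → n) → Prop)] (M : Matrix n n R) :
    M.permanent = ∑ g : n → n with g.Bijective, ∏ i, M i (g i) := by
  rw [← permanent_transpose, permanent, ← sum_subtype_eq_sum_filter, subtype_univ]
  exact Fintype.sum_equiv Equiv.bijectiveEquiv.symm _ _ fun σ => rfl

/-- The coefficient of `Y^{2ⁿ−1}` in `f_n := ∏_{i=1}^{n} (Σ_{j=1}^{n} X_{ij} Y^{2^{j−1}})`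
is the permanent of the `n×n` matrix `(X_{ij})`. -/
theorem coeff_eq_permanent {k : Type} [Field k] (n : ℕ) :
    (∏ i : Fin n, ∑ j : Fin n,
        Polynomial.C (MvPolynomial.X (R := k) (i, j)) *
          (Polynomial.X : Polynomial (MvPolynomial (Fin n × Fin n) k)) ^ (2 ^ (j : ℕ))).coeff
      (2 ^ n - 1) =
    Matrix.permanent (Matrix.of fun i j : Fin n => MvPolynomial.X (R := k) (i, j)) := by
  classical
  rw [coeff_prod_sum_C_mul_X_pow (fun i j => MvPolynomial.X (i, j))
      (fun j : Fin n => 2 ^ (j : ℕ)), Matrix.permanent_eq_sum_bijective]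
  exact sum_congr (filter_congr fun g _ => Fin.sum_two_pow_eq_iff_bijective g) fun g _ => rfl
end

section
/- Let R ⊂ k(ε) be the local ring of rational functions defined at ε = 0 over a field k. Let Φ ∈ k(ε,δ) be a rational function such that Φ, viewed as a rational function in δ over k(ε), is defined at δ = 0 with value Φ_{δ=0}, and such that Φ_{δ=0} is defined at ε = 0 with value λ ∈ k. Then for all sufficiently large N ∈ ℕ, the rational function ε ↦ Φ(ε, ε^N) is defined at ε = 0 with value λ. -/
/-!
Clear denominators: `Φ = P(δ)/Q(δ)` with `P, Q ∈ k[ε][δ]`, so `Φ(ε, 0) = P(0)/Q(0)` and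
`Φ(ε, ε^N) = P(ε^N)/Q(ε^N)`. If `m` is the order of `Q(0)` in `ε`, then `Φ(ε, 0)` being defined at
`ε = 0` forces `ε^m ∣ P(0)`, and its value there is the ratio of the `ε^m`-coefficients. Since
`q(ε^N) ≡ q(0) mod ε^N`, for `N > m` the polynomials `P(ε^N), Q(ε^N)` have the same coefficients as
`P(0), Q(0)` up to `ε^m`, so the same ratio computes the value of `Φ(ε, ε^N)` at `ε = 0`.
-/

open Polynomial

lemma Polynomial.X_pow_natTrailingDegree_dvd {R : Type*} [Semiring R] (p : R[X]) :
    X ^ p.natTrailingDegree ∣ p :=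
  X_pow_dvd_iff.mpr fun _ hd => coeff_eq_zero_of_lt_natTrailingDegree hd

lemma Polynomial.coeff_eval_X_pow_of_lt {R : Type*} [CommRing R] (q : R[X][X]) {N i : ℕ}
    (hi : i < N) : (q.eval (X ^ N)).coeff i = (q.eval 0).coeff i := by
  obtain ⟨w, hw⟩ := sub_zero (X ^ N : R[X]) ▸ sub_dvd_eval_sub (X ^ N) 0 q
  rw [← sub_eq_zero, ← coeff_sub, hw, coeff_X_pow_mul', if_neg hi.not_ge]

lemma Polynomial.X_pow_dvd_eval_X_pow_iff {R : Type*} [CommRing R] (q : R[X][X]) {m N : ℕ}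
    (hmN : m ≤ N) : X ^ m ∣ q.eval (X ^ N) ↔ X ^ m ∣ q.eval 0 := by
  simp only [X_pow_dvd_iff]
  exact forall₂_congr fun d hd => by rw [coeff_eval_X_pow_of_lt q (hd.trans_le hmN)]

lemma IsLocalization.exists_algebraMap_eval_eq_mul {R S : Type*} [CommRing R] [CommRing S]
    [Algebra R S] (M : Submonoid R) [IsLocalization M S] (p : S[X]) :
    ∃ P : R[X], ∃ c ∈ M, ∀ y : R,
      algebraMap R S (P.eval y) = algebraMap R S c * p.eval (algebraMap R S y) := by
  obtain ⟨c, hc, hP⟩ := integerNormalization_spec M p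
  refine ⟨integerNormalization M p, c, hc, fun y => ?_⟩
  rw [← eval₂_at_apply, ← eval_map, hP, eval_smul, Algebra.smul_def]

lemma RatFunc.eval_id_eq_div {K : Type*} [Field K] (a : K) (x : RatFunc K) :
    RatFunc.eval (RingHom.id K) a x = x.num.eval a / x.denom.eval a := by
  simp only [RatFunc.eval, eval₂_id]

lemma IsFractionRing.exists_ratFunc_eval_eq_div {A K : Type*} [CommRing A] [IsDomain A] [Field K]
    [Algebra A K] [IsFractionRing A K] (Φ : RatFunc K) :
    ∃ P Q : A[X], ∀ y : A, (Φ.denom.eval (algebraMap A K y) ≠ 0 ↔ Q.eval y ≠ 0) ∧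
      RatFunc.eval (RingHom.id K) (algebraMap A K y) Φ =
        algebraMap A K (P.eval y) / algebraMap A K (Q.eval y) := by
  obtain ⟨P, c, hc, hP⟩ := IsLocalization.exists_algebraMap_eval_eq_mul (nonZeroDivisors A) Φ.num
  obtain ⟨Q, d, hd, hQ⟩ := IsLocalization.exists_algebraMap_eval_eq_mul (nonZeroDivisors A) Φ.denom
  have hc0 : algebraMap A K c ≠ 0 := IsFractionRing.to_map_ne_zero_of_mem_nonZeroDivisors hc
  have hd0 : algebraMap A K d ≠ 0 := IsFractionRing.to_map_ne_zero_of_mem_nonZeroDivisors hd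
  refine ⟨P * C d, Q * C c, fun y => ⟨?_, ?_⟩⟩
  · rw [← (IsFractionRing.injective A K).ne_iff, eval_mul, eval_C, map_mul, hQ, map_zero]
    simp [hc0, hd0]
  · rw [RatFunc.eval_id_eq_div, eval_mul, eval_C, eval_mul, eval_C, map_mul, map_mul, hP, hQ]
    field_simp

namespace RatFunc

variable {K : Type*} [Field K]

lemma denom_div_eval_ne_zero {f g : K[X]} (hg : g.eval 0 ≠ 0) :
    (algebraMap K[X] (RatFunc K) f / algebraMap K[X] (RatFunc K) g).denom.eval 0 ≠ 0 := by
  obtain ⟨t, ht⟩ := denom_div_dvd f g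
  rw [ht, Polynomial.eval_mul] at hg
  exact left_ne_zero_of_mul hg

lemma eval_zero_div {f g : K[X]} (hg : g.eval 0 ≠ 0) :
    RatFunc.eval (RingHom.id K) 0 (algebraMap K[X] (RatFunc K) f / algebraMap K[X] (RatFunc K) g)
      = f.eval 0 / g.eval 0 := by
  have hg' : algebraMap K[X] (RatFunc K) g ≠ 0 :=
    algebraMap_ne_zero fun h => hg (by simp [h])
  have hmul := eval_mul (RingHom.id K) 0 (x := algebraMap K[X] (RatFunc K) f / algebraMap K[X] (RatFunc K) g)
    (y := algebraMap K[X] (RatFunc K) g) (by rw [eval₂_id]; exact denom_div_eval_ne_zero hg)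
    (by simp)
  rw [div_mul_cancel₀ _ hg', eval_algebraMap, eval_algebraMap] at hmul
  simp only [Algebra.algebraMap_self, RingHom.id_apply, eval₂_id] at hmul
  rw [eq_div_iff hg, hmul]

lemma eval_zero_div_of_X_pow_dvd {f g : K[X]} {m : ℕ} (hf : Polynomial.X ^ m ∣ f)
    (hg : Polynomial.X ^ m ∣ g) (hgm : g.coeff m ≠ 0) :
    (algebraMap K[X] (RatFunc K) f / algebraMap K[X] (RatFunc K) g).denom.eval 0 ≠ 0 ∧
      RatFunc.eval (RingHom.id K) 0
        (algebraMap K[X] (RatFunc K) f / algebraMap K[X] (RatFunc K) g) = f.coeff m / g.coeff m := by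
  obtain ⟨f', rfl⟩ := hf
  obtain ⟨g', rfl⟩ := hg
  simp only [coeff_X_pow_mul', le_rfl, if_true, Nat.sub_self, coeff_zero_eq_eval_zero] at hgm ⊢
  have hXm : algebraMap K[X] (RatFunc K) (Polynomial.X ^ m) ≠ 0 :=
    algebraMap_ne_zero (pow_ne_zero m Polynomial.X_ne_zero)
  simp only [map_mul, mul_div_mul_left _ _ hXm]
  exact ⟨denom_div_eval_ne_zero hgm, eval_zero_div hgm⟩

lemma X_pow_natTrailingDegree_dvd_of_denom_div_eval_ne_zero {f g : K[X]} (hg : g ≠ 0)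
    (h : (algebraMap K[X] (RatFunc K) f / algebraMap K[X] (RatFunc K) g).denom.eval 0 ≠ 0) :
    Polynomial.X ^ g.natTrailingDegree ∣ f := by
  set r := algebraMap K[X] (RatFunc K) f / algebraMap K[X] (RatFunc K) g
  have hcross : r.num * g = r.denom * f := by
    apply algebraMap_injective K
    have := num_div_denom r
    rw [div_eq_div_iff (algebraMap_ne_zero r.denom_ne_zero) (algebraMap_ne_zero hg)] at this
    simpa only [map_mul, mul_comm] using this
  refine prime_X.pow_dvd_of_dvd_mul_left _ ?_
    (hcross ▸ dvd_mul_of_dvd_right (X_pow_natTrailingDegree_dvd g) _)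
  rwa [X_dvd_iff, coeff_zero_eq_eval_zero]

end RatFunc

/-- Let `Φ ∈ k(ε,δ)` be defined at `δ = 0` (over `k(ε)`) with value `Φ_{δ=0}`, and let
`Φ_{δ=0}` be defined at `ε = 0` with value `λ ∈ k`. Then for all sufficiently large `N`,
the rational function `ε ↦ Φ(ε, ε^N)` is defined at `ε = 0` with value `λ`. -/
theorem substitution_defined_for_large_N {k : Type} [Field k]
    (Φ : RatFunc (RatFunc k)) (lam : k)
    (hδ : Polynomial.eval (0 : RatFunc k) Φ.denom ≠ 0)
    (hε : Polynomial.eval (0 : k)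
      (RatFunc.eval (RingHom.id (RatFunc k)) 0 Φ).denom ≠ 0)
    (hval : RatFunc.eval (RingHom.id k) 0
      (RatFunc.eval (RingHom.id (RatFunc k)) 0 Φ) = lam) :
    ∃ N₀ : ℕ, ∀ N ≥ N₀,
      Polynomial.eval ((RatFunc.X : RatFunc k) ^ N) Φ.denom ≠ 0 ∧
      Polynomial.eval (0 : k)
        (RatFunc.eval (RingHom.id (RatFunc k)) ((RatFunc.X : RatFunc k) ^ N) Φ).denom ≠ 0 ∧
      RatFunc.eval (RingHom.id k) 0
        (RatFunc.eval (RingHom.id (RatFunc k)) ((RatFunc.X : RatFunc k) ^ N) Φ) = lam := by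
  obtain ⟨P, Q, hPQ⟩ := IsFractionRing.exists_ratFunc_eval_eq_div (A := k[X]) Φ
  obtain ⟨hQ, hΦ₀⟩ := hPQ 0
  rw [map_zero] at hQ hΦ₀
  rw [hΦ₀] at hε hval
  have hQ₀ : Q.eval 0 ≠ 0 := hQ.mp hδ
  set m := (Q.eval 0).natTrailingDegree
  have hPm : X ^ m ∣ P.eval 0 :=
    RatFunc.X_pow_natTrailingDegree_dvd_of_denom_div_eval_ne_zero hQ₀ hε
  have hQm : (Q.eval 0).coeff m ≠ 0 := mt trailingCoeff_eq_zero.mp hQ₀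
  rw [(RatFunc.eval_zero_div_of_X_pow_dvd hPm (X_pow_natTrailingDegree_dvd _) hQm).2] at hval
  refine ⟨m + 1, fun N hN => ?_⟩
  obtain ⟨hQN, hΦN⟩ := hPQ (X ^ N)
  rw [map_pow, RatFunc.algebraMap_X] at hQN hΦN
  have hmN : m ≤ N := by omega
  have hcoeff (q : k[X][X]) : (q.eval (X ^ N)).coeff m = (q.eval 0).coeff m :=
    coeff_eval_X_pow_of_lt q hN
  obtain ⟨hden, hvalN⟩ := RatFunc.eval_zero_div_of_X_pow_dvd
    ((X_pow_dvd_eval_X_pow_iff P hmN).mpr hPm)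
    ((X_pow_dvd_eval_X_pow_iff Q hmN).mpr (X_pow_natTrailingDegree_dvd _)) (hcoeff Q ▸ hQm)
  refine ⟨hQN.mpr fun h => hQm ?_, hΦN ▸ hden, by rw [hΦN, hvalN, hcoeff, hcoeff, hval]⟩
  rw [← hcoeff, h, coeff_zero]
end

section
/- Over a field k of characteristic zero, let f = g^e h in k[X₁,…,X_{n−1}][Y] with g, h monic-compatible: g monic in Y. Write homogeneous decompositions (in the X-variables) f = Σ f^{(δ)}, g = Σ g^{(δ)}, h = Σ h^{(δ)}. For s ≥ 0 set F := (Σ_{δ≤s} g^{(δ)})^e · (Σ_{δ≤s} h^{(δ)}) and Δ^{(s+1)} := f^{(s+1)} − F^{(s+1)}. Then Δ^{(s+1)} = e·(g^{(0)})^{e−1}·g^{(s+1)}·h^{(0)} + (g^{(0)})^e·h^{(s+1)} in k[X][Y]. -/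
/-- The part of `a ∈ k[X][Y]` whose `X`-coefficients are homogeneous of degree `δ`. -/
noncomputable def homPart {k : Type} [Field k] (m : ℕ) (δ : ℕ)
    (a : Polynomial (MvPolynomial (Fin m) k)) : Polynomial (MvPolynomial (Fin m) k) :=
  a.sum fun i c => Polynomial.monomial i (MvPolynomial.homogeneousComponent δ c)

/-!
Substituting `X ↦ t X` turns the decomposition into `X`-homogeneous parts into the `t`-adic
expansion: `a^{(δ)}` is the `t^δ`-coefficient of `a(tX, Y)`. The truncations
`G = Σ_{δ≤s} g^{(δ)}` and `H = Σ_{δ≤s} h^{(δ)}` agree with `g` and `h` modulo `t^{s+1}`, so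
writing `g = G + D`, `h = H + E`, the products of two of `D`, `E` are divisible by `t^{2(s+1)}`,
and the `t^{s+1}`-coefficients of `g^e h` and `G^e H` differ only by the first-order terms
`e G^{e-1} D H + G^e E`, whose `t^{s+1}`-coefficients only see `G` and `H` at `t = 0`.
-/

open Polynomial

namespace Polynomial

variable {A : Type*} [CommRing A]

theorem coeff_mul_of_X_pow_dvd {D : A[X]} {n : ℕ} (hD : X ^ n ∣ D) (F : A[X]) :
    (F * D).coeff n = F.coeff 0 * D.coeff n := by
  obtain ⟨R, rfl⟩ := hD
  rw [mul_left_comm, coeff_X_pow_mul', coeff_X_pow_mul']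
  simp [mul_coeff_zero]

theorem coeff_pow_mul_sub_coeff_pow_mul {P P₀ Q Q₀ : A[X]} {n : ℕ} (hn : n ≠ 0)
    (hP : X ^ n ∣ P - P₀) (hQ : X ^ n ∣ Q - Q₀) (e : ℕ) :
    (P ^ e * Q).coeff n - (P₀ ^ e * Q₀).coeff n =
      e * P₀.coeff 0 ^ (e - 1) * (P - P₀).coeff n * Q₀.coeff 0 +
        P₀.coeff 0 ^ e * (Q - Q₀).coeff n := by
  set D := P - P₀
  set E := Q - Q₀
  obtain ⟨c, hc⟩ := sq_dvd_add_pow_sub_sub D P₀ e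
  -- `X ^ (2 n)` divides `D * (…)` because `X ^ n` divides both `D` and `E`.
  have hsq : X ^ (n + 1) ∣ D * ((e : A[X]) * P₀ ^ (e - 1) * E + D * c * Q) := by
    refine (pow_dvd_pow X (by omega : n + 1 ≤ n + n)).trans ?_
    rw [pow_add]
    exact mul_dvd_mul hP (dvd_add (dvd_mul_of_dvd_right hQ _) (dvd_mul_of_dvd_left
      (dvd_mul_of_dvd_left hP _) _))
  have expand : P ^ e * Q = P₀ ^ e * Q₀ + (((e : A[X]) * P₀ ^ (e - 1) * Q₀) * D + P₀ ^ e * E) +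
      D * ((e : A[X]) * P₀ ^ (e - 1) * E + D * c * Q) := by
    rw [show P = P₀ + D by ring, show Q = Q₀ + E by ring] at *
    linear_combination (Q₀ + E) * hc
  rw [expand, coeff_add, coeff_add, coeff_add, coeff_mul_of_X_pow_dvd hP,
    coeff_mul_of_X_pow_dvd hQ, X_pow_dvd_iff.mp hsq n n.lt_succ_self]
  simp only [coeff_zero_eq_eval_zero, eval_mul, eval_pow, eval_natCast, add_zero]
  ring

end Polynomial

namespace MvPolynomial

variable {σ R : Type*} [CommSemiring R]

variable (σ R) in
noncomputable def scaleVars : MvPolynomial σ R →ₐ[R] (MvPolynomial σ R)[X] :=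
  aeval fun i => Polynomial.C (X i) * Polynomial.X

theorem scaleVars_monomial (d : σ →₀ ℕ) (r : R) :
    scaleVars σ R (monomial d r) = Polynomial.C (monomial d r) * Polynomial.X ^ d.degree := by
  rw [scaleVars, aeval_monomial, monomial_eq, Finsupp.prod, Finsupp.prod, Finsupp.degree_apply,
    map_mul, map_prod]
  simp only [mul_pow, Finset.prod_mul_distrib, Finset.prod_pow_eq_pow_sum, map_pow,
    Polynomial.algebraMap_apply, algebraMap_eq, mul_assoc]

theorem coeff_scaleVars (φ : MvPolynomial σ R) (n : ℕ) :
    (scaleVars σ R φ).coeff n = homogeneousComponent n φ := by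
  induction φ using MvPolynomial.induction_on' with
  | monomial d r =>
    rw [scaleVars_monomial, coeff_C_mul_X_pow,
      homogeneousComponent_of_mem (isHomogeneous_monomial r rfl)]
  | add p q hp hq => rw [map_add, Polynomial.coeff_add, hp, hq, map_add]

end MvPolynomial

section ScaleCoeffVars

open MvPolynomial (scaleVars homogeneousComponent)

variable {σ R : Type*} [CommSemiring R]

variable (σ R) in
/-- `a(X, Y) ↦ a(t X, Y)`, with the new variable `t` outermost. -/
noncomputable def scaleCoeffVars : (MvPolynomial σ R)[X] →+* (MvPolynomial σ R)[X][X] :=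
  eval₂RingHom (S := (MvPolynomial σ R)[X][X]) ((mapRingHom C).comp (scaleVars σ R).toRingHom)
    (C X)

theorem coeff_coeff_scaleCoeffVars (a : (MvPolynomial σ R)[X]) (n i : ℕ) :
    ((scaleCoeffVars σ R a).coeff n).coeff i = homogeneousComponent n (a.coeff i) := by
  induction a using Polynomial.induction_on' with
  | monomial j c =>
    rw [scaleCoeffVars, coe_eval₂RingHom, eval₂_monomial, ← map_pow, coeff_mul_C,
      RingHom.comp_apply, coe_mapRingHom, coeff_map, AlgHom.toRingHom_eq_coe, RingHom.coe_coe,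
      MvPolynomial.coeff_scaleVars, coeff_C_mul_X_pow, coeff_monomial]
    rcases eq_or_ne i j with rfl | h
    · simp
    · simp [h, Ne.symm h]
  | add p q hp hq => simp only [map_add, coeff_add, hp, hq]

end ScaleCoeffVars

section HomPart

variable {k : Type} [Field k] {m : ℕ}

theorem coeff_homPart (δ : ℕ) (a : (MvPolynomial (Fin m) k)[X])
    (i : ℕ) : (homPart m δ a).coeff i = MvPolynomial.homogeneousComponent δ (a.coeff i) := by
  rw [homPart, Polynomial.sum_def, finsetSum_coeff]
  simp only [coeff_monomial]
  rw [Finset.sum_ite_eq' a.support i]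
  split_ifs with h
  · rfl
  · rw [notMem_support_iff.mp h, map_zero]

theorem coeff_scaleCoeffVars (a : (MvPolynomial (Fin m) k)[X])
    (δ : ℕ) : (scaleCoeffVars (Fin m) k a).coeff δ = homPart m δ a := by
  ext i
  rw [coeff_coeff_scaleCoeffVars, coeff_homPart]

theorem homPart_sum_range_homPart (a : (MvPolynomial (Fin m) k)[X])
    (s j : ℕ) :
    homPart m j (∑ δ ∈ Finset.range s, homPart m δ a) = if j < s then homPart m j a else 0 := by
  ext i
  simp only [coeff_homPart, finsetSum_coeff, map_sum,
    MvPolynomial.homogeneousComponent_of_mem (MvPolynomial.homogeneousComponent_mem _ _),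
    Finset.sum_ite_eq, Finset.mem_range]
  split_ifs <;> simp [coeff_homPart]

end HomPart

theorem hensel_step_general {k : Type} [Field k] (m : ℕ)
    (f g h : Polynomial (MvPolynomial (Fin m) k)) (e : ℕ)
    (hf : f = g ^ e * h) (s : ℕ) :
    homPart m (s + 1) f -
      homPart m (s + 1)
        ((∑ δ ∈ Finset.range (s + 1), homPart m δ g) ^ e *
          (∑ δ ∈ Finset.range (s + 1), homPart m δ h)) =
    (e : Polynomial (MvPolynomial (Fin m) k)) * (homPart m 0 g) ^ (e - 1) *
        homPart m (s + 1) g * homPart m 0 h +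
      (homPart m 0 g) ^ e * homPart m (s + 1) h := by
  have agree_mod (a : (MvPolynomial (Fin m) k)[X]) :
      X ^ (s + 1) ∣ scaleCoeffVars (Fin m) k a -
        scaleCoeffVars (Fin m) k (∑ δ ∈ Finset.range (s + 1), homPart m δ a) := by
    refine X_pow_dvd_iff.mpr fun d hd => ?_
    rw [coeff_sub, coeff_scaleCoeffVars, coeff_scaleCoeffVars, homPart_sum_range_homPart,
      if_pos hd, sub_self]
  have key := coeff_pow_mul_sub_coeff_pow_mul s.add_one_ne_zero (agree_mod g) (agree_mod h) e
  rw [← map_pow, ← map_mul, ← map_pow, ← map_mul, ← hf] at key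
  simpa only [coeff_sub, coeff_scaleCoeffVars, homPart_sum_range_homPart, s.zero_lt_succ,
    lt_self_iff_false, if_true, if_false, sub_zero] using key

/-- Hensel lifting step: for `f = g^e h` in `k[X][Y]` (`g` monic in `Y`, `char k = 0`),
with `F := (Σ_{δ≤s} g^{(δ)})^e · (Σ_{δ≤s} h^{(δ)})` and `Δ^{(s+1)} := f^{(s+1)} − F^{(s+1)}`,
one has `Δ^{(s+1)} = e·(g^{(0)})^{e−1}·g^{(s+1)}·h^{(0)} + (g^{(0)})^e·h^{(s+1)}`. -/
theorem hensel_step {k : Type} [Field k] [CharZero k] (m : ℕ)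
    (f g h : Polynomial (MvPolynomial (Fin m) k)) (e : ℕ) (he : 1 ≤ e)
    (hmonic : g.Monic) (hf : f = g ^ e * h) (s : ℕ) :
    homPart m (s + 1) f -
      homPart m (s + 1)
        ((∑ δ ∈ Finset.range (s + 1), homPart m δ g) ^ e *
          (∑ δ ∈ Finset.range (s + 1), homPart m δ h)) =
    (e : Polynomial (MvPolynomial (Fin m) k)) * (homPart m 0 g) ^ (e - 1) *
        homPart m (s + 1) g * homPart m 0 h +
      (homPart m 0 g) ^ e * homPart m (s + 1) h :=
  hensel_step_general m f g h e hf s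
end
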